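/- There exists a constant C > 0 such that for every integer l ≥ 1, every λ > 0, every s ∈ {0,1,…,⌈log₂(l+1)⌉} and every x ∈ Q_l, one has (1/l²) Σ_{k ∈ A_s} (e^D_k(x))² / (ζ_k + λ)² ≤ C · 2^{−2s} / (λ + 2^{−2s})². (This quantity is the variance of the annulus component ḡ^λ_{x,A_s} = (1/l) Σ_{k∈A_s} e^D_k(x) α̂(k)/(ζ_k+λ) of the massive Gaussian field when the α̂(k) are independent standard Gaussians.) -/
import Mathlib


open Finset
open scoped Classical

/-- The momentum `k = (π j₁/(l+1), π j₂/(l+1))` for `j ∈ {1,…,l}²`. -/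
noncomputable def kvec (l : ℕ) (j : ℕ × ℕ) : ℝ × ℝ :=
  (Real.pi * j.1 / (l + 1), Real.pi * j.2 / (l + 1))

/-- Dirichlet eigenfunction `e^D_k(x) = 2 sin(k₁x₁) sin(k₂x₂)`. -/
noncomputable def eD (l : ℕ) (j : ℕ × ℕ) (x : ℤ × ℤ) : ℝ :=
  2 * Real.sin ((kvec l j).1 * x.1) * Real.sin ((kvec l j).2 * x.2)

/-- Eigenvalue `ζ_k = 4(sin²(k₁/2) + sin²(k₂/2))`. -/
noncomputable def zeta (l : ℕ) (j : ℕ × ℕ) : ℝ :=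
  4 * (Real.sin ((kvec l j).1 / 2) ^ 2 + Real.sin ((kvec l j).2 / 2) ^ 2)

/-- The dyadic momentum annulus
`A_s = {k ∈ Λ*_l : π 2^{−(1+s)} ≤ ‖k‖₂ ≤ π 2^{−s}}`, indexed by `j ∈ {1,…,l}²`. -/
noncomputable def annulus (l s : ℕ) : Finset (ℕ × ℕ) :=
  (Finset.Icc 1 l ×ˢ Finset.Icc 1 l).filter fun j =>
    Real.pi * (2 : ℝ) ^ (-(1 + (s : ℤ))) ≤
        Real.sqrt ((kvec l j).1 ^ 2 + (kvec l j).2 ^ 2) ∧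
      Real.sqrt ((kvec l j).1 ^ 2 + (kvec l j).2 ^ 2) ≤ Real.pi * (2 : ℝ) ^ (-(s : ℤ))

set_option maxHeartbeats 2000000 in
/-- Variance bound for the annulus component of the massive Gaussian field:
`(1/l²) Σ_{k∈A_s} e^D_k(x)²/(ζ_k+λ)² ≤ C 2^{−2s}/(λ+2^{−2s})²`. -/
theorem stmt5 :
    ∃ C : ℝ, 0 < C ∧
      ∀ l : ℕ, 1 ≤ l → ∀ lam : ℝ, 0 < lam →
        ∀ s : ℕ, s ≤ ⌈Real.logb 2 ((l : ℝ) + 1)⌉₊ →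
          ∀ x ∈ Finset.Icc (1 : ℤ) (l : ℤ) ×ˢ Finset.Icc (1 : ℤ) (l : ℤ),
            (1 / (l : ℝ) ^ 2) * ∑ j ∈ annulus l s, (eD l j x) ^ 2 / (zeta l j + lam) ^ 2
              ≤ C * (2 : ℝ) ^ (-(2 * (s : ℤ))) / (lam + (2 : ℝ) ^ (-(2 * (s : ℤ)))) ^ 2 := by
  refine ⟨64, by norm_num, ?_⟩
  intro l hl lam hlam s _hs x _hx
  have hπ := Real.pi_pos
  set t : ℝ := (2 : ℝ) ^ (-(s : ℤ)) with ht
  have ht0 : 0 < t := by positivity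
  have ht2 : (2 : ℝ) ^ (-(2 * (s : ℤ))) = t ^ 2 := by
    rw [ht, sq, ← zpow_add₀ (by norm_num : (2:ℝ) ≠ 0)]
    congr 1; ring
  have hl0 : (0 : ℝ) < l := by exact_mod_cast hl
  have hl1 : (0 : ℝ) < (l : ℝ) + 1 := by linarith
  have hden : 0 < lam + t ^ 2 := by positivity
  -- bound each term
  have hterm : ∀ j ∈ annulus l s,
      (eD l j x) ^ 2 / (zeta l j + lam) ^ 2 ≤ 16 / (lam + t ^ 2) ^ 2 := by
    intro j hj
    simp only [annulus, Finset.mem_filter, Finset.mem_product, Finset.mem_Icc] at hj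
    obtain ⟨⟨⟨hj1a, hj1b⟩, ⟨hj2a, hj2b⟩⟩, hlo, _⟩ := hj
    set a := (kvec l j).1 with ha
    set b := (kvec l j).2 with hb
    have hj1a' : (1 : ℝ) ≤ j.1 := by exact_mod_cast hj1a
    have hj1b' : (j.1 : ℝ) ≤ l := by exact_mod_cast hj1b
    have hj2a' : (1 : ℝ) ≤ j.2 := by exact_mod_cast hj2a
    have hj2b' : (j.2 : ℝ) ≤ l := by exact_mod_cast hj2b
    have ha0 : 0 ≤ a := by
      rw [ha]; unfold kvec; dsimp only; positivity
    have hb0 : 0 ≤ b := by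
      rw [hb]; unfold kvec; dsimp only; positivity
    have haπ : a ≤ Real.pi := by
      rw [ha]; unfold kvec; dsimp only
      rw [div_le_iff₀ hl1]
      nlinarith
    have hbπ : b ≤ Real.pi := by
      rw [hb]; unfold kvec; dsimp only
      rw [div_le_iff₀ hl1]
      nlinarith
    -- sin(a/2) ≥ a/π
    have hsa : a / Real.pi ≤ Real.sin (a / 2) := by
      have h := Real.mul_le_sin (x := a / 2) (by linarith) (by linarith)
      calc a / Real.pi = 2 / Real.pi * (a / 2) := by field_simp
        _ ≤ _ := h
    have hsb : b / Real.pi ≤ Real.sin (b / 2) := by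
      have h := Real.mul_le_sin (x := b / 2) (by linarith) (by linarith)
      calc b / Real.pi = 2 / Real.pi * (b / 2) := by field_simp
        _ ≤ _ := h
    -- lower bound on a² + b²
    have hab : Real.pi ^ 2 * (t ^ 2 / 4) ≤ a ^ 2 + b ^ 2 := by
      have h1 : (Real.pi * (2 : ℝ) ^ (-(1 + (s : ℤ)))) ^ 2 ≤ a ^ 2 + b ^ 2 := by
        have hs0 : 0 ≤ Real.pi * (2 : ℝ) ^ (-(1 + (s : ℤ))) := by positivity
        have hsq := Real.sq_sqrt (by positivity : (0:ℝ) ≤ a ^ 2 + b ^ 2)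
        nlinarith [Real.sqrt_nonneg (a ^ 2 + b ^ 2)]
      have h2 : ((2 : ℝ) ^ (-(1 + (s : ℤ)))) ^ 2 = t ^ 2 / 4 := by
        have h20 : (2:ℝ) ≠ 0 := by norm_num
        rw [ht, sq, ← zpow_add₀ h20, sq, ← zpow_add₀ h20,
          show ((4:ℝ)) = (2:ℝ)^(2:ℤ) by norm_num, ← zpow_sub₀ h20]
        congr 1; ring
      calc Real.pi ^ 2 * (t ^ 2 / 4) = (Real.pi * (2 : ℝ) ^ (-(1 + (s : ℤ)))) ^ 2 := by
            rw [mul_pow, h2]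
        _ ≤ a ^ 2 + b ^ 2 := h1
    -- zeta lower bound
    have hz : t ^ 2 ≤ zeta l j := by
      have h1 : (a / Real.pi) ^ 2 ≤ Real.sin (a / 2) ^ 2 := by
        have h0 : 0 ≤ a / Real.pi := by positivity
        nlinarith
      have h2 : (b / Real.pi) ^ 2 ≤ Real.sin (b / 2) ^ 2 := by
        have h0 : 0 ≤ b / Real.pi := by positivity
        nlinarith
      have hze : zeta l j = 4 * (Real.sin (a / 2) ^ 2 + Real.sin (b / 2) ^ 2) := rfl
      rw [hze]
      have hπ2 : 0 < Real.pi ^ 2 := by positivity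
      have h3 : (a ^ 2 + b ^ 2) / Real.pi ^ 2
          ≤ Real.sin (a / 2) ^ 2 + Real.sin (b / 2) ^ 2 := by
        rw [div_pow] at h1 h2
        rw [div_le_iff₀ hπ2] at h1 h2 ⊢
        ring_nf at h1 h2 ⊢
        nlinarith
      have h4 : t ^ 2 ≤ 4 * ((a ^ 2 + b ^ 2) / Real.pi ^ 2) := by
        have h4' : t ^ 2 / 4 ≤ (a ^ 2 + b ^ 2) / Real.pi ^ 2 := by
          rw [div_le_div_iff₀ (by norm_num) hπ2]; nlinarith
        linarith
      linarith [mul_le_mul_of_nonneg_left h3 (by norm_num : (0:ℝ) ≤ 4)]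
    have hz0 : 0 < zeta l j + lam := by nlinarith
    -- numerator bound
    have hnum : (eD l j x) ^ 2 ≤ 4 := by
      have h1 := Real.neg_one_le_sin (a * x.1)
      have h2 := Real.sin_le_one (a * x.1)
      have h3 := Real.neg_one_le_sin (b * x.2)
      have h4 := Real.sin_le_one (b * x.2)
      have he : eD l j x = 2 * Real.sin (a * x.1) * Real.sin (b * x.2) := rfl
      rw [he]
      have s1 : Real.sin (a * x.1) ^ 2 ≤ 1 := by nlinarith
      have s2 : Real.sin (b * x.2) ^ 2 ≤ 1 := by nlinarith
      nlinarith [sq_nonneg (Real.sin (a * x.1)), sq_nonneg (Real.sin (b * x.2)),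
        mul_le_one₀ s1 (sq_nonneg _) s2]
    have hd2 : lam + t ^ 2 ≤ 2 * (zeta l j + lam) := by linarith
    rw [div_le_div_iff₀ (by positivity) (by positivity)]
    have hsq2 : (lam + t ^ 2) ^ 2 ≤ 4 * (zeta l j + lam) ^ 2 := by
      calc (lam + t ^ 2) ^ 2 ≤ (2 * (zeta l j + lam)) ^ 2 :=
            pow_le_pow_left₀ hden.le hd2 2
        _ = 4 * (zeta l j + lam) ^ 2 := by ring
    have h5 := mul_le_mul hnum hsq2 (by positivity) (by norm_num : (0:ℝ) ≤ 4)
    linarith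
  -- cardinality bound
  set m : ℕ := ⌊((l : ℝ) + 1) * t⌋₊ with hm
  have hsub : annulus l s ⊆ Finset.Icc 1 m ×ˢ Finset.Icc 1 m := by
    intro j hj
    simp only [annulus, Finset.mem_filter, Finset.mem_product, Finset.mem_Icc] at hj ⊢
    obtain ⟨⟨⟨hj1a, hj1b⟩, ⟨hj2a, hj2b⟩⟩, _, hhi⟩ := hj
    have key : ∀ c : ℕ, (Real.pi * c / (l + 1)) = (kvec l j).1 ∨
        (Real.pi * c / (l + 1)) = (kvec l j).2 → True := fun _ _ => trivial
    have h1 : (kvec l j).1 ≤ Real.pi * t := by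
      refine le_trans ?_ hhi
      rw [Real.le_sqrt (by unfold kvec; dsimp only; positivity) (by positivity)]
      nlinarith [sq_nonneg (kvec l j).2]
    have h2 : (kvec l j).2 ≤ Real.pi * t := by
      refine le_trans ?_ hhi
      rw [Real.le_sqrt (by unfold kvec; dsimp only; positivity) (by positivity)]
      nlinarith [sq_nonneg (kvec l j).1]
    have hm1 : j.1 ≤ m := by
      apply Nat.le_floor
      unfold kvec at h1; dsimp only at h1
      have h1' : ((j.1 : ℝ)) / ((l : ℝ) + 1) ≤ t := by
        have hmm : Real.pi * ((j.1 : ℝ) / ((l : ℝ) + 1)) ≤ Real.pi * t := by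
          rw [← mul_div_assoc]; exact h1
        exact le_of_mul_le_mul_left hmm hπ
      rw [div_le_iff₀ hl1] at h1'
      linarith
    have hm2 : j.2 ≤ m := by
      apply Nat.le_floor
      unfold kvec at h2; dsimp only at h2
      have h2' : ((j.2 : ℝ)) / ((l : ℝ) + 1) ≤ t := by
        have hmm : Real.pi * ((j.2 : ℝ) / ((l : ℝ) + 1)) ≤ Real.pi * t := by
          rw [← mul_div_assoc]; exact h2
        exact le_of_mul_le_mul_left hmm hπ
      rw [div_le_iff₀ hl1] at h2'
      linarith
    exact ⟨⟨hj1a, hm1⟩, ⟨hj2a, hm2⟩⟩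
  have hcard : ((annulus l s).card : ℝ) ≤ 4 * (l : ℝ) ^ 2 * t ^ 2 := by
    have h1 : (annulus l s).card ≤ m * m := by
      calc (annulus l s).card ≤ (Finset.Icc 1 m ×ˢ Finset.Icc 1 m).card :=
            Finset.card_le_card hsub
        _ ≤ m * m := by
            rw [Finset.card_product]
            exact Nat.mul_le_mul (by simp [Nat.card_Icc]) (by simp [Nat.card_Icc])
    have h2 : (m : ℝ) ≤ ((l : ℝ) + 1) * t := Nat.floor_le (by positivity)
    have hl1'' : (1 : ℝ) ≤ l := by exact_mod_cast hl
    have h3 : ((l : ℝ) + 1) * t ≤ 2 * l * t :=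
      mul_le_mul_of_nonneg_right (by linarith) ht0.le
    have h1' : ((annulus l s).card : ℝ) ≤ (m : ℝ) * m := by exact_mod_cast h1
    have h4 : (m : ℝ) ≤ 2 * l * t := h2.trans h3
    calc ((annulus l s).card : ℝ) ≤ (m : ℝ) * m := h1'
      _ ≤ (2 * l * t) * (2 * l * t) :=
          mul_le_mul h4 h4 (Nat.cast_nonneg m) (by positivity)
      _ = 4 * (l : ℝ) ^ 2 * t ^ 2 := by ring
  -- combine
  have hsum : ∑ j ∈ annulus l s, (eD l j x) ^ 2 / (zeta l j + lam) ^ 2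
      ≤ ((annulus l s).card : ℝ) * (16 / (lam + t ^ 2) ^ 2) := by
    have h := Finset.sum_le_card_nsmul (annulus l s) _ _ hterm
    rwa [nsmul_eq_mul] at h
  have hB : (0:ℝ) ≤ 16 / (lam + t ^ 2) ^ 2 := by positivity
  have hfinal : (1 / (l : ℝ) ^ 2) * ∑ j ∈ annulus l s, (eD l j x) ^ 2 / (zeta l j + lam) ^ 2
      ≤ 64 * t ^ 2 / (lam + t ^ 2) ^ 2 := by
    have h5 : ∑ j ∈ annulus l s, (eD l j x) ^ 2 / (zeta l j + lam) ^ 2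
        ≤ 4 * (l : ℝ) ^ 2 * t ^ 2 * (16 / (lam + t ^ 2) ^ 2) :=
      hsum.trans (mul_le_mul_of_nonneg_right hcard hB)
    have h6 : (1 / (l : ℝ) ^ 2) * (4 * (l : ℝ) ^ 2 * t ^ 2 * (16 / (lam + t ^ 2) ^ 2))
        = 64 * t ^ 2 / (lam + t ^ 2) ^ 2 := by
      field_simp
      ring
    calc (1 / (l : ℝ) ^ 2) * ∑ j ∈ annulus l s, (eD l j x) ^ 2 / (zeta l j + lam) ^ 2
        ≤ (1 / (l : ℝ) ^ 2) * (4 * (l : ℝ) ^ 2 * t ^ 2 * (16 / (lam + t ^ 2) ^ 2)) := by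
          apply mul_le_mul_of_nonneg_left h5 (by positivity)
      _ = 64 * t ^ 2 / (lam + t ^ 2) ^ 2 := h6
  rw [ht2]
  calc _ ≤ 64 * t ^ 2 / (lam + t ^ 2) ^ 2 := hfinal
    _ = 64 * t ^ 2 / (lam + t ^ 2) ^ 2 := rfl
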